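/- Fix constants a > 0, b > 0, let μ be a probability measure on ℂ and let β > 0 be such that |h| ≤ β for μ-almost every h. Then the MVU filter f_MVU = x/‖x‖² is not a minimizer of the average zeroth-order error probability: there exists a nonzero filter f ∈ ℂ^B such that ∫ P0(f, h) dμ(h) < ∫ P0(f_MVU, h) dμ(h). (Proposition 7: the MVU estimator is not optimal for minimizing the average [P_e]_0 under a prior channel distribution supported on a bounded set.) -/

import Mathlib

open MeasureTheory

/-- `φ(f) = fᴴ x = Σᵢ conj(fᵢ)·xᵢ`. -/
noncomputable def phi {B : ℕ} (x f : Fin B → ℂ) : ℂ :=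
  ∑ i, (starRingEnd ℂ) (f i) * x i

/-- Squared Euclidean norm `‖f‖² = Σᵢ |fᵢ|²`. -/
noncomputable def nsq {B : ℕ} (f : Fin B → ℂ) : ℝ :=
  ∑ i, Complex.normSq (f i)

/-- Zeroth-order symbol-estimate MSE of the ZF equalizer for channel `h`. -/
noncomputable def Mdc {B : ℕ} (σx2 σw2 : ℝ) (h : ℂ) (x f : Fin B → ℂ) : ℝ :=
  (σx2 * (Complex.normSq h * Complex.normSq (phi x f - 1) + σw2 * nsq f) + σw2) /
    (Complex.normSq h * Complex.normSq (phi x f) + σw2 * nsq f)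

/-- Standard Gaussian tail function `Q(u) = (1/√(2π)) ∫_u^∞ e^{−t²/2} dt`. -/
noncomputable def Qfun (u : ℝ) : ℝ :=
  (Real.sqrt (2 * Real.pi))⁻¹ * ∫ t in Set.Ioi u, Real.exp (-t ^ 2 / 2)

/-- Zeroth-order error probability `[P_e]₀ = a·Q(b·√(σx²/M_dc(f, h)))`. -/
noncomputable def P0dc {B : ℕ} (a b σx2 σw2 : ℝ) (h : ℂ) (x f : Fin B → ℂ) : ℝ :=
  a * Qfun (b * Real.sqrt (σx2 / Mdc σx2 σw2 h x f))

/-- The MVU channel-estimating filter `f_MVU = x / ‖x‖²`. -/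
noncomputable def fMVU {B : ℕ} (x : Fin B → ℂ) : Fin B → ℂ :=
  fun i => x i / (nsq x : ℂ)

/-!
Along the ray `f = (t / ‖x‖²) • x` the gain `φ(f)` equals `t`, and `M_dc` becomes an explicit
rational function of `t` and `|h|²`; the MVU filter is the point `t = 1`. Comparing `t` with `1`
amounts to `σx² |h|² (t - 1)² < σw² (t² - 1)`, which holds for every `|h| ≤ β` as soon as
`1 < t ≤ 1 + σw² / (σx² β²)`: a slightly biased gain lowers the MSE on the whole support of the
prior. Since `Q` is strictly decreasing, `P₀` drops pointwise, hence strictly on average.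
-/

theorem integral_lt_integral_of_ae_lt {α : Type*} [MeasurableSpace α]
    {μ : Measure α} [NeZero μ] {f g : α → ℝ} (hf : Integrable f μ) (hg : Integrable g μ)
    (hlt : ∀ᵐ a ∂μ, f a < g a) : ∫ a, f a ∂μ < ∫ a, g a ∂μ := by
  rw [← sub_pos, ← integral_sub hg hf,
    integral_pos_iff_support_of_nonneg_ae (hlt.mono fun _ h => (sub_pos.2 h).le) (hg.sub hf)]
  have hfull : Function.support (fun a => g a - f a) =ᵐ[μ] (Set.univ : Set α) :=
    ae_eq_univ.2 (ae_iff.1 (hlt.mono fun _ h => sub_ne_zero.2 h.ne'))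
  rw [measure_congr hfull]
  exact Measure.measure_univ_pos.2 (NeZero.ne μ)

theorem integrable_exp_neg_sq_div_two : Integrable fun t : ℝ => Real.exp (-t ^ 2 / 2) := by
  simpa [neg_div, div_eq_inv_mul, mul_comm] using
    integrable_exp_neg_mul_sq (show (0 : ℝ) < 1 / 2 by norm_num)

theorem integral_exp_neg_sq_div_two : ∫ t : ℝ, Real.exp (-t ^ 2 / 2) = Real.sqrt (2 * Real.pi) := by
  simpa [neg_div, div_eq_inv_mul, mul_comm] using integral_gaussian (1 / 2)

theorem Qfun_nonneg (u : ℝ) : 0 ≤ Qfun u :=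
  mul_nonneg (by positivity)
    (setIntegral_nonneg measurableSet_Ioi fun t _ => (Real.exp_pos _).le)

theorem Qfun_le_one (u : ℝ) : Qfun u ≤ 1 := by
  calc Qfun u ≤ (Real.sqrt (2 * Real.pi))⁻¹ * ∫ t : ℝ, Real.exp (-t ^ 2 / 2) :=
        mul_le_mul_of_nonneg_left (setIntegral_le_integral integrable_exp_neg_sq_div_two
          (.of_forall fun t => (Real.exp_pos _).le)) (by positivity)
    _ = 1 := by
      rw [integral_exp_neg_sq_div_two]
      exact inv_mul_cancel₀ (by positivity)

theorem Qfun_strictAnti : StrictAnti Qfun := by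
  intro u v huv
  have hsplit : ∫ t in Set.Ioi u, Real.exp (-t ^ 2 / 2) =
      (∫ t in Set.Ioc u v, Real.exp (-t ^ 2 / 2)) + ∫ t in Set.Ioi v, Real.exp (-t ^ 2 / 2) := by
    rw [← setIntegral_union (Set.Ioc_disjoint_Ioi le_rfl) measurableSet_Ioi
      integrable_exp_neg_sq_div_two.integrableOn integrable_exp_neg_sq_div_two.integrableOn,
      Set.Ioc_union_Ioi_eq_Ioi huv.le]
  have hpos : 0 < ∫ t in Set.Ioc u v, Real.exp (-t ^ 2 / 2) := by
    rw [← intervalIntegral.integral_of_le huv.le]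
    exact intervalIntegral.intervalIntegral_pos_of_pos
      integrable_exp_neg_sq_div_two.intervalIntegrable (fun t => Real.exp_pos _) huv
  unfold Qfun
  gcongr
  linarith

theorem nsq_pos {B : ℕ} {x : Fin B → ℂ} (hx : x ≠ 0) : 0 < nsq x := by
  obtain ⟨i, hi⟩ := Function.ne_iff.mp hx
  exact Finset.sum_pos' (fun j _ => Complex.normSq_nonneg _)
    ⟨i, Finset.mem_univ i, Complex.normSq_pos.mpr hi⟩

theorem nsq_smul {B : ℕ} (c : ℂ) (f : Fin B → ℂ) : nsq (c • f) = Complex.normSq c * nsq f := by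
  simp [nsq, Finset.mul_sum]

theorem phi_smul {B : ℕ} (x : Fin B → ℂ) (c : ℂ) (f : Fin B → ℂ) :
    phi x (c • f) = starRingEnd ℂ c * phi x f := by
  simp [phi, Finset.mul_sum, mul_assoc]

theorem phi_self {B : ℕ} (x : Fin B → ℂ) : phi x x = nsq x := by
  simp [phi, nsq, Complex.normSq_eq_conj_mul_self]

theorem fMVU_eq_smul {B : ℕ} (x : Fin B → ℂ) : fMVU x = ((1 / nsq x : ℝ) : ℂ) • x := by
  ext i
  simp [fMVU, div_eq_inv_mul]

/-- `M_dc` of the filter `(t / ‖x‖²) • x`, whose gain `φ` is `t`, written in terms of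
`u = |h|²` and `v = 1 / ‖x‖²`. -/
noncomputable def rayMdc (σx2 σw2 u v t : ℝ) : ℝ :=
  (σx2 * (u * (t - 1) ^ 2 + σw2 * (t ^ 2 * v)) + σw2) / (u * t ^ 2 + σw2 * (t ^ 2 * v))

theorem Mdc_smul_training {B : ℕ} (σx2 σw2 : ℝ) (h : ℂ) {x : Fin B → ℂ} (hx : x ≠ 0) (t : ℝ) :
    Mdc σx2 σw2 h x (((t / nsq x : ℝ) : ℂ) • x) =
      rayMdc σx2 σw2 (Complex.normSq h) (1 / nsq x) t := by
  have hs := (nsq_pos hx).ne'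
  have hphi : phi x (((t / nsq x : ℝ) : ℂ) • x) = (t : ℂ) := by
    rw [phi_smul, phi_self, Complex.conj_ofReal, ← Complex.ofReal_mul, div_mul_cancel₀ _ hs]
  have hnsq : nsq (((t / nsq x : ℝ) : ℂ) • x) = t ^ 2 * (1 / nsq x) := by
    rw [nsq_smul, Complex.normSq_ofReal]
    field_simp
  rw [Mdc, rayMdc, hphi, hnsq, ← Complex.ofReal_one, ← Complex.ofReal_sub,
    Complex.normSq_ofReal, Complex.normSq_ofReal, ← sq, ← sq]

theorem rayMdc_pos {σx2 σw2 u v t : ℝ} (hσx : 0 < σx2) (hσw : 0 < σw2) (hu : 0 ≤ u)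
    (hv : 0 < v) (ht : 0 < t) : 0 < rayMdc σx2 σw2 u v t := by
  unfold rayMdc
  positivity

theorem rayMdc_lt_rayMdc_one {σx2 σw2 u v t : ℝ} (hσw : 0 < σw2) (hu : 0 ≤ u) (hv : 0 < v)
    (ht : 1 < t) (hgain : σx2 * u * (t - 1) < σw2 * (t + 1)) :
    rayMdc σx2 σw2 u v t < rayMdc σx2 σw2 u v 1 := by
  have hD : 0 < u + σw2 * v := by positivity
  have hnum : σx2 * u * (t - 1) ^ 2 < σw2 * (t ^ 2 - 1) := by
    nlinarith [mul_lt_mul_of_pos_right hgain (sub_pos.2 ht)]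
  unfold rayMdc
  rw [div_lt_div_iff₀ (by positivity) (by positivity)]
  nlinarith [mul_lt_mul_of_pos_right hnum hD]

theorem P0dc_lt_of_Mdc_lt {B : ℕ} {a b σx2 σw2 : ℝ} (ha : 0 < a) (hb : 0 < b) (hσx : 0 < σx2)
    {h : ℂ} {x f g : Fin B → ℂ} (hf : 0 < Mdc σx2 σw2 h x f)
    (hfg : Mdc σx2 σw2 h x f < Mdc σx2 σw2 h x g) :
    P0dc a b σx2 σw2 h x f < P0dc a b σx2 σw2 h x g := by
  have hg : 0 < Mdc σx2 σw2 h x g := hf.trans hfg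
  unfold P0dc
  exact mul_lt_mul_of_pos_left (Qfun_strictAnti (by gcongr)) ha

theorem measurable_P0dc {B : ℕ} (a b σx2 σw2 : ℝ) (x f : Fin B → ℂ) :
    Measurable fun h => P0dc a b σx2 σw2 h x f := by
  have hQ : Measurable Qfun := Qfun_strictAnti.antitone.measurable
  unfold P0dc Mdc
  fun_prop

theorem integrable_P0dc {B : ℕ} {a : ℝ} (ha : 0 ≤ a) (b σx2 σw2 : ℝ) (x f : Fin B → ℂ)
    (μ : Measure ℂ) [IsFiniteMeasure μ] : Integrable (fun h => P0dc a b σx2 σw2 h x f) μ := by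
  refine Integrable.of_bound (C := a) (measurable_P0dc a b σx2 σw2 x f).aestronglyMeasurable
    (.of_forall fun h => ?_)
  unfold P0dc
  rw [Real.norm_of_nonneg (mul_nonneg ha (Qfun_nonneg _))]
  exact mul_le_of_le_one_right ha (Qfun_le_one _)

theorem mvu_not_optimal_average_zeroth_order_pe_general
    (B : ℕ) (x : Fin B → ℂ) (hx : x ≠ 0)
    (σx2 σw2 : ℝ) (hσx : 0 < σx2) (hσw : 0 < σw2)
    (a b : ℝ) (ha : 0 < a) (hb : 0 < b)
    (μ : Measure ℂ) [IsProbabilityMeasure μ]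
    (β : ℝ) (hβ : 0 < β) (hsupp : ∀ᵐ h ∂μ, ‖h‖ ≤ β) :
    ∃ f : Fin B → ℂ, f ≠ 0 ∧
      (∫ h, P0dc a b σx2 σw2 h x f ∂μ) < ∫ h, P0dc a b σx2 σw2 h x (fMVU x) ∂μ := by
  set t : ℝ := 1 + σw2 / (σx2 * β ^ 2)
  have ht : 1 < t := lt_add_of_pos_right 1 (by positivity)
  have hv : 0 < 1 / nsq x := one_div_pos.2 (nsq_pos hx)
  refine ⟨((t / nsq x : ℝ) : ℂ) • x, smul_ne_zero ?_ hx, ?_⟩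
  · exact Complex.ofReal_ne_zero.2 (div_pos (by linarith) (nsq_pos hx)).ne'
  refine integral_lt_integral_of_ae_lt (integrable_P0dc ha.le _ _ _ _ _ _)
    (integrable_P0dc ha.le _ _ _ _ _ _) ?_
  filter_upwards [hsupp] with h hh
  have hgain : σx2 * Complex.normSq h * (t - 1) < σw2 * (t + 1) :=
    calc σx2 * Complex.normSq h * (t - 1) ≤ σx2 * β ^ 2 * (t - 1) := by
          gcongr
          rw [← Complex.sq_norm]
          gcongr
      _ = σw2 := by simp only [t]; field_simp; ring
      _ < σw2 * (t + 1) := by nlinarith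
  apply P0dc_lt_of_Mdc_lt ha hb hσx
  · rw [Mdc_smul_training _ _ _ hx]
    exact rayMdc_pos hσx hσw (Complex.normSq_nonneg h) hv (by linarith)
  · rw [fMVU_eq_smul, Mdc_smul_training _ _ _ hx, Mdc_smul_training _ _ _ hx]
    exact rayMdc_lt_rayMdc_one hσw (Complex.normSq_nonneg h) hv ht hgain

/-- Proposition 7: the MVU estimator is not optimal for minimizing the average
zeroth-order error probability under a prior channel distribution supported on
a bounded set. -/
theorem mvu_not_optimal_average_zeroth_order_pe
    (B : ℕ) (hB : 1 ≤ B) (x : Fin B → ℂ) (hx : x ≠ 0)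
    (σx2 σw2 : ℝ) (hσx : 0 < σx2) (hσw : 0 < σw2)
    (a b : ℝ) (ha : 0 < a) (hb : 0 < b)
    (μ : Measure ℂ) [IsProbabilityMeasure μ]
    (β : ℝ) (hβ : 0 < β) (hsupp : ∀ᵐ h ∂μ, ‖h‖ ≤ β) :
    ∃ f : Fin B → ℂ, f ≠ 0 ∧
      (∫ h, P0dc a b σx2 σw2 h x f ∂μ) < ∫ h, P0dc a b σx2 σw2 h x (fMVU x) ∂μ :=
  mvu_not_optimal_average_zeroth_order_pe_general B x hx σx2 σw2 hσx hσw a b ha hb μ β hβ hsupp
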